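/- For every positive integer n and every n×n complex matrix A, the mean squared deviation of the Glynn estimator from the permanent over uniformly random sign vectors is at most ‖A‖^{2n}: 2^{−n} Σ_{x ∈ {−1,1}^n} |Gly_x(A) − Per(A)|² ≤ ‖A‖^{2n}. -/

import Mathlib

open scoped Matrix.Norms.L2Operator

/-- The Glynn estimator of an `n × n` complex matrix `A` at a sign vector `x`:
`Gly_x(A) = x_1 ⋯ x_n ∏_i (a_{i,1} x_1 + ⋯ + a_{i,n} x_n)`. -/
noncomputable def glynn {n : ℕ} (A : Matrix (Fin n) (Fin n) ℂ) (x : Fin n → ℂ) : ℂ :=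
  (∏ i, x i) * ∏ i, ∑ j, A i j * x j

/-- The permanent of an `n × n` complex matrix. -/
noncomputable def permanent {n : ℕ} (A : Matrix (Fin n) (Fin n) ℂ) : ℂ :=
  ∑ σ : Equiv.Perm (Fin n), ∏ i, A i (σ i)

/-!
Expanding the product, `Gly_x(A) = ∑_f (∏ᵢ a_{i,f(i)}) (∏ᵢ xᵢ)(∏ᵢ x_{f(i)})` over all maps
`f : [n] → [n]`. Averaged over sign vectors, the sign factor is `1` when `f` is a permutation
and `0` otherwise, so the mean of `Gly_x(A)` is `Per(A)` and the mean squared deviation is the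
second moment of `Gly_x(A)` minus `|Per(A)|²`. Pointwise, `|Gly_x(A)|² = ∏ᵢ |(Ax)ᵢ|²`, which by
AM-GM is at most `(‖Ax‖² / n)ⁿ ≤ (‖A‖² ‖x‖² / n)ⁿ = ‖A‖²ⁿ` because `‖x‖² = n`.
-/

open Finset
open scoped Matrix

section SignVectors

variable (R ι : Type*) [CommRing R] [DecidableEq R] [Fintype ι] [DecidableEq ι]

def signVectors : Finset (ι → R) :=
  Fintype.piFinset fun _ => {-1, 1}

variable {R ι}

lemma mem_signVectors {x : ι → R} : x ∈ signVectors R ι ↔ ∀ i, x i = -1 ∨ x i = 1 := by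
  simp [signVectors]

lemma mul_self_eq_one_of_mem_signVectors {x : ι → R} (hx : x ∈ signVectors R ι) (i : ι) :
    x i * x i = 1 := by
  rcases mem_signVectors.mp hx i with h | h <;> simp [h]

lemma norm_eq_one_of_mem_signVectors {R : Type*} [NormedCommRing R] [NormOneClass R]
    [DecidableEq R] {x : ι → R} (hx : x ∈ signVectors R ι) (i : ι) : ‖x i‖ = 1 := by
  rcases mem_signVectors.mp hx i with h | h <;> simp [h]

lemma card_signVectors [NeZero (2 : R)] : #(signVectors R ι) = 2 ^ Fintype.card ι := by
  have : (-1 : R) ≠ 1 := fun h => two_ne_zero (α := R) (by linear_combination -h)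
  simp [signVectors, card_pair this]

lemma sum_signVectors_eq_zero_of_odd [NeZero (2 : R)] {M : Type*} [AddCommGroup M]
    (F : (ι → R) → M) (j : ι)
    (hF : ∀ x ∈ signVectors R ι, F (Function.update x j (-x j)) = -F x) :
    ∑ x ∈ signVectors R ι, F x = 0 := by
  refine sum_involution (fun x _ => Function.update x j (-x j)) (fun x hx => by simp [hF x hx])
    (fun x hx _ heq => ?_) (fun x hx => ?_) (fun x _ => by simp)
  · have hj : -x j = x j := by simpa using congrFun heq j
    apply two_ne_zero (α := R)
    linear_combination (-2) * mul_self_eq_one_of_mem_signVectors hx j + (-x j) * hj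
  · rw [mem_signVectors] at hx ⊢
    intro i
    rcases eq_or_ne i j with rfl | hij
    · rcases hx i with h | h <;> simp [h]
    · simpa [hij] using hx i

lemma sum_signVectors_prod_mul_prod_comp_of_bijective [NeZero (2 : R)] {f : ι → ι}
    (hf : f.Bijective) :
    ∑ x ∈ signVectors R ι, (∏ i, x i) * ∏ i, x (f i) = 2 ^ Fintype.card ι := by
  have hterm : ∀ x ∈ signVectors R ι, (∏ i, x i) * ∏ i, x (f i) = 1 := fun x hx => by
    rw [hf.prod_comp, ← prod_mul_distrib]
    exact prod_eq_one fun i _ => mul_self_eq_one_of_mem_signVectors hx i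
  simp [sum_congr rfl hterm, card_signVectors]

lemma sum_signVectors_prod_mul_prod_comp_of_not_surjective [NeZero (2 : R)] {f : ι → ι}
    (hf : ¬ f.Surjective) :
    ∑ x ∈ signVectors R ι, (∏ i, x i) * ∏ i, x (f i) = 0 := by
  -- `x j` for `j` outside the range of `f` occurs once in the summand, so flipping it negates it.
  obtain ⟨j, hj⟩ : ∃ j, ∀ i, f i ≠ j := by simpa [Function.Surjective] using hf
  refine sum_signVectors_eq_zero_of_odd _ j fun x _ => ?_
  have hflip : ∏ i, Function.update x j (-x j) i = -∏ i, x i := by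
    rw [prod_update_of_mem (mem_univ j), Fintype.prod_eq_mul_prod_compl j, compl_eq_univ_sdiff,
      neg_mul]
  simp [hflip, Function.update_of_ne (hj _)]

end SignVectors

lemma sum_signVectors_glynn {n : ℕ} (A : Matrix (Fin n) (Fin n) ℂ) :
    ∑ x ∈ signVectors ℂ (Fin n), glynn A x = 2 ^ n * permanent A := by
  have hexpand : ∀ x, glynn A x =
      ∑ f : Fin n → Fin n, (∏ i, A i (f i)) * ((∏ i, x i) * ∏ i, x (f i)) := fun x => by
    rw [glynn, prod_univ_sum, Fintype.piFinset_univ, mul_sum]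
    exact sum_congr rfl fun f _ => by rw [prod_mul_distrib]; ring
  simp_rw [hexpand]
  rw [sum_comm, permanent]
  simp_rw [← mul_sum]
  rw [mul_sum]
  symm
  refine Fintype.sum_of_injective (M := ℂ) (fun σ : Equiv.Perm (Fin n) => ⇑σ)
    DFunLike.coe_injective _ _ (fun f hf => ?_) (fun σ => ?_)
  · have : ¬ f.Surjective := fun hs =>
      hf ⟨Equiv.ofBijective f (Finite.surjective_iff_bijective.mp hs), rfl⟩
    rw [sum_signVectors_prod_mul_prod_comp_of_not_surjective this, mul_zero]
  · rw [sum_signVectors_prod_mul_prod_comp_of_bijective σ.bijective, Fintype.card_fin, mul_comm]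

lemma prod_le_sum_div_card_pow {ι : Type*} (s : Finset ι) {z : ι → ℝ} (hz : ∀ i ∈ s, 0 ≤ z i) :
    ∏ i ∈ s, z i ≤ ((∑ i ∈ s, z i) / #s) ^ #s := by
  rcases s.eq_empty_or_nonempty with rfl | hs
  · simp
  have hamgm := Real.geom_mean_le_arith_mean s 1 z (by simp) (by simpa using hs) hz
  simp only [Pi.one_apply, Real.rpow_one, sum_const, nsmul_eq_mul, mul_one, one_mul] at hamgm
  rwa [Real.rpow_inv_le_iff_of_pos (prod_nonneg hz) (div_nonneg (sum_nonneg hz) (by positivity))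
    (by simpa using hs), Real.rpow_natCast] at hamgm

lemma sum_norm_mulVec_sq_le {𝕜 m n : Type*} [RCLike 𝕜] [Fintype m] [Fintype n] [DecidableEq n]
    (A : Matrix m n 𝕜) (x : n → 𝕜) :
    ∑ i, ‖(A *ᵥ x) i‖ ^ 2 ≤ ‖A‖ ^ 2 * ∑ j, ‖x j‖ ^ 2 := by
  have h := A.l2_opNorm_mulVec (WithLp.toLp 2 x)
  have h2 := pow_le_pow_left₀ (norm_nonneg _) h 2
  rwa [mul_pow, EuclideanSpace.norm_sq_eq, EuclideanSpace.norm_sq_eq] at h2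

lemma norm_glynn_sq_le {n : ℕ} (A : Matrix (Fin n) (Fin n) ℂ) {x : Fin n → ℂ}
    (hx : ∀ i, ‖x i‖ = 1) :
    ‖glynn A x‖ ^ 2 ≤ ‖A‖ ^ (2 * n) := by
  have hAx : ∑ i, ‖(A *ᵥ x) i‖ ^ 2 ≤ ‖A‖ ^ 2 * n := by
    simpa [hx] using sum_norm_mulVec_sq_le A x
  calc ‖glynn A x‖ ^ 2 = ∏ i, ‖(A *ᵥ x) i‖ ^ 2 := by
        simp [glynn, norm_prod, hx, prod_pow, Matrix.mulVec, dotProduct]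
    _ ≤ ((∑ i, ‖(A *ᵥ x) i‖ ^ 2) / n) ^ n := by
        simpa using prod_le_sum_div_card_pow univ fun i _ => sq_nonneg ‖(A *ᵥ x) i‖
    _ ≤ (‖A‖ ^ 2 * n / n) ^ n := by gcongr
    _ = ‖A‖ ^ (2 * n) := by
        rcases eq_or_ne n 0 with rfl | hn
        · simp
        · rw [mul_div_cancel_right₀ _ (Nat.cast_ne_zero.mpr hn), pow_mul]

lemma sum_norm_sub_sq_eq_of_sum_eq {α E : Type*} [NormedAddCommGroup E] [InnerProductSpace ℝ E]
    (s : Finset α) (g : α → E) {p : E} (hp : ∑ x ∈ s, g x = (#s : ℝ) • p) :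
    ∑ x ∈ s, ‖g x - p‖ ^ 2 = ∑ x ∈ s, ‖g x‖ ^ 2 - #s * ‖p‖ ^ 2 := by
  simp_rw [norm_sub_sq_real, sum_add_distrib, sum_sub_distrib, ← mul_sum, ← sum_inner, hp,
    real_inner_smul_left, real_inner_self_eq_norm_sq, sum_const, nsmul_eq_mul]
  ring

theorem glynn_mean_squared_deviation_le_general (n : ℕ)
    (A : Matrix (Fin n) (Fin n) ℂ) :
    (2 : ℝ) ^ (-(n : ℤ)) *
        ∑ x ∈ Fintype.piFinset (fun _ : Fin n => ({-1, 1} : Finset ℂ)),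
          ‖glynn A x - permanent A‖ ^ 2 ≤ ‖A‖ ^ (2 * n) := by
  change _ * ∑ x ∈ signVectors ℂ (Fin n), _ ≤ _
  have hcard : #(signVectors ℂ (Fin n)) = 2 ^ n := by simp [card_signVectors]
  have hmean : ∑ x ∈ signVectors ℂ (Fin n), glynn A x
      = (#(signVectors ℂ (Fin n)) : ℝ) • permanent A := by
    simp [sum_signVectors_glynn, hcard, Complex.real_smul]
  rw [zpow_neg, zpow_natCast, inv_mul_le_iff₀ (by positivity)]
  calc ∑ x ∈ signVectors ℂ (Fin n), ‖glynn A x - permanent A‖ ^ 2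
      = ∑ x ∈ signVectors ℂ (Fin n), ‖glynn A x‖ ^ 2
          - #(signVectors ℂ (Fin n)) * ‖permanent A‖ ^ 2 :=
        sum_norm_sub_sq_eq_of_sum_eq _ _ hmean
    _ ≤ ∑ x ∈ signVectors ℂ (Fin n), ‖glynn A x‖ ^ 2 := sub_le_self _ (by positivity)
    _ ≤ #(signVectors ℂ (Fin n)) • ‖A‖ ^ (2 * n) :=
        sum_le_card_nsmul _ _ _ fun x hx => norm_glynn_sq_le A (norm_eq_one_of_mem_signVectors hx)
    _ = 2 ^ n * ‖A‖ ^ (2 * n) := by rw [nsmul_eq_mul, hcard]; push_cast; rfl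

/-- For every positive `n` and every `n × n` complex matrix `A`, the mean squared deviation
of the Glynn estimator from the permanent over uniformly random sign vectors is at most
`‖A‖^{2n}` (with `‖A‖` the ℓ² → ℓ² operator norm):
`2^{-n} ∑_{x ∈ {-1,1}ⁿ} |Gly_x(A) - Per(A)|² ≤ ‖A‖^{2n}`. -/
theorem glynn_mean_squared_deviation_le (n : ℕ) (hn : 0 < n)
    (A : Matrix (Fin n) (Fin n) ℂ) :
    (2 : ℝ) ^ (-(n : ℤ)) *
        ∑ x ∈ Fintype.piFinset (fun _ : Fin n => ({-1, 1} : Finset ℂ)),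
          ‖glynn A x - permanent A‖ ^ 2 ≤ ‖A‖ ^ (2 * n) :=
  glynn_mean_squared_deviation_le_general n A
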